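/- Let 𝔈 be a right inner product 𝔅-module admitting a finite module frame {v₁,…,vₙ}, i.e., Id = ∑ₖ Θ^R_{vₖ,vₖ} where Θ^R_{e₁,e₂}(e) = e₁·(e₂|e)_𝔅. Then the matrix p = ((vᵢ|vⱼ)_𝔅) ∈ Mₙ(𝔅) is an idempotent satisfying p* = p, and the maps S(e) = ((vⱼ|e)_𝔅)ⱼ and R((bⱼ)ⱼ) = ∑ⱼ vⱼ·bⱼ restrict to mutually inverse module isomorphisms between 𝔈 and p𝔅ⁿ. -/

import Mathlib

/-!
Pairing the frame expansion `e = ∑ⱼ vⱼ·(vⱼ|e)` with any `e'` gives the reproducing formula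
`∑ⱼ (e'|vⱼ)(vⱼ|e) = (e'|e)`. For `e' = vᵢ` it says that `S e` is fixed by `p`, and for
`e' = vᵢ, e = vⱼ` that `p² = p`; conversely, if `p b = b` then `S (R b) = p b = b`.
-/

section RightInnerProductModule

variable {B E ι : Type*} [AddCommGroup E] (smul : E → B → E)

theorem finset_sum_smul (hadd_smul : ∀ e e' b, smul (e + e') b = smul e b + smul e' b)
    (s : Finset ι) (f : ι → E) (c : B) :
    smul (∑ k ∈ s, f k) c = ∑ k ∈ s, smul (f k) c :=
  map_sum (AddMonoidHom.mk' (smul · c) (hadd_smul · · c)) f s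

variable [Ring B] (inn : E → E → B)

theorem inn_finset_sum (hinn_add : ∀ e₁ e₂ e₃, inn e₁ (e₂ + e₃) = inn e₁ e₂ + inn e₁ e₃)
    (e : E) (s : Finset ι) (f : ι → E) :
    inn e (∑ k ∈ s, f k) = ∑ k ∈ s, inn e (f k) :=
  map_sum (AddMonoidHom.mk' (inn e) (hinn_add e)) f s

variable [Fintype ι]

theorem inn_sum_smul (hinn_lin : ∀ e₁ e₂ b, inn e₁ (smul e₂ b) = inn e₁ e₂ * b)
    (hinn_add : ∀ e₁ e₂ e₃, inn e₁ (e₂ + e₃) = inn e₁ e₂ + inn e₁ e₃)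
    (e : E) (v : ι → E) (b : ι → B) :
    inn e (∑ j, smul (v j) (b j)) = ∑ j, inn e (v j) * b j := by
  rw [inn_finset_sum inn hinn_add]
  exact Finset.sum_congr rfl fun j _ => hinn_lin _ _ _

theorem sum_inn_mul_inn_of_frame (hinn_lin : ∀ e₁ e₂ b, inn e₁ (smul e₂ b) = inn e₁ e₂ * b)
    (hinn_add : ∀ e₁ e₂ e₃, inn e₁ (e₂ + e₃) = inn e₁ e₂ + inn e₁ e₃)
    (v : ι → E) (hframe : ∀ e : E, e = ∑ k, smul (v k) (inn (v k) e)) (e' e : E) :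
    ∑ j, inn e' (v j) * inn (v j) e = inn e' e := by
  rw [← inn_sum_smul smul inn hinn_lin hinn_add, ← hframe e]

end RightInnerProductModule

theorem stmt12_general {B E : Type*} [Ring B] [StarRing B] [AddCommGroup E]
    (smul : E → B → E) (inn : E → E → B)
    -- right module and inner product axioms
    (hadd_smul : ∀ e e' b, smul (e + e') b = smul e b + smul e' b)
    (hsmul_mul : ∀ e b b', smul (smul e b) b' = smul e (b * b'))
    (hinn_star : ∀ e₁ e₂, star (inn e₁ e₂) = inn e₂ e₁)
    (hinn_lin : ∀ e₁ e₂ b, inn e₁ (smul e₂ b) = inn e₁ e₂ * b)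
    (hinn_add : ∀ e₁ e₂ e₃, inn e₁ (e₂ + e₃) = inn e₁ e₂ + inn e₁ e₃)
    {n : ℕ} (v : Fin n → E)
    -- finite module frame: Id = ∑ₖ Θ^R_{vₖ,vₖ}
    (hframe : ∀ e : E, e = ∑ k, smul (v k) (inn (v k) e)) :
    letI p : Matrix (Fin n) (Fin n) B := Matrix.of fun i j => inn (v i) (v j)
    -- p is a self-adjoint idempotent
    p * p = p ∧ Matrix.conjTranspose p = p ∧
    -- R ∘ S = Id on 𝔈
    (∀ e : E, (∑ j, smul (v j) (inn (v j) e)) = e) ∧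
    -- S maps 𝔈 into p𝔅ⁿ
    (∀ (e : E) (i : Fin n), inn (v i) e = ∑ j, p i j * inn (v j) e) ∧
    -- S ∘ R = Id on p𝔅ⁿ
    (∀ b : Fin n → B, (∀ i, b i = ∑ j, p i j * b j) →
      ∀ i, inn (v i) (∑ j, smul (v j) (b j)) = b i) ∧
    -- S and R are right module maps
    (∀ (e : E) (c : B) (i : Fin n), inn (v i) (smul e c) = inn (v i) e * c) ∧
    (∀ (b : Fin n → B) (c : B),
      smul (∑ j, smul (v j) (b j)) c = ∑ j, smul (v j) (b j * c)) := by
  have reproducing := sum_inn_mul_inn_of_frame smul inn hinn_lin hinn_add v hframe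
  refine ⟨?_, ?_, fun e => (hframe e).symm, fun e i => (reproducing (v i) e).symm, ?_,
    fun e c i => hinn_lin _ _ _, ?_⟩
  · ext i j
    exact reproducing (v i) (v j)
  · ext i j
    exact hinn_star (v j) (v i)
  · intro b hb i
    exact (inn_sum_smul smul inn hinn_lin hinn_add (v i) v b).trans (hb i).symm
  · intro b c
    rw [finset_sum_smul smul hadd_smul]
    exact Finset.sum_congr rfl fun j _ => hsmul_mul _ _ _

/-- if a right inner product 𝔅-module 𝔈 admits a finite module frame
{v₁,…,vₙ}, then p = ((vᵢ|vⱼ)) ∈ Mₙ(𝔅) is a self-adjoint idempotent, and the maps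
S(e) = ((vⱼ|e))ⱼ and R((bⱼ)) = ∑ⱼ vⱼ·bⱼ restrict to mutually inverse module
isomorphisms between 𝔈 and p𝔅ⁿ. -/
theorem stmt12 {B E : Type*} [Ring B] [StarRing B] [AddCommGroup E]
    (smul : E → B → E) (inn : E → E → B)
    -- right module and inner product axioms
    (hsmul_add : ∀ e b b', smul e (b + b') = smul e b + smul e b')
    (hadd_smul : ∀ e e' b, smul (e + e') b = smul e b + smul e' b)
    (hsmul_mul : ∀ e b b', smul (smul e b) b' = smul e (b * b'))
    (hinn_star : ∀ e₁ e₂, star (inn e₁ e₂) = inn e₂ e₁)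
    (hinn_lin : ∀ e₁ e₂ b, inn e₁ (smul e₂ b) = inn e₁ e₂ * b)
    (hinn_add : ∀ e₁ e₂ e₃, inn e₁ (e₂ + e₃) = inn e₁ e₂ + inn e₁ e₃)
    (hinn_def : ∀ e, inn e e = 0 → e = 0)
    {n : ℕ} (v : Fin n → E)
    -- finite module frame: Id = ∑ₖ Θ^R_{vₖ,vₖ}
    (hframe : ∀ e : E, e = ∑ k, smul (v k) (inn (v k) e)) :
    letI p : Matrix (Fin n) (Fin n) B := Matrix.of fun i j => inn (v i) (v j)
    -- p is a self-adjoint idempotent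
    p * p = p ∧ Matrix.conjTranspose p = p ∧
    -- R ∘ S = Id on 𝔈
    (∀ e : E, (∑ j, smul (v j) (inn (v j) e)) = e) ∧
    -- S maps 𝔈 into p𝔅ⁿ
    (∀ (e : E) (i : Fin n), inn (v i) e = ∑ j, p i j * inn (v j) e) ∧
    -- S ∘ R = Id on p𝔅ⁿ
    (∀ b : Fin n → B, (∀ i, b i = ∑ j, p i j * b j) →
      ∀ i, inn (v i) (∑ j, smul (v j) (b j)) = b i) ∧
    -- S and R are right module maps
    (∀ (e : E) (c : B) (i : Fin n), inn (v i) (smul e c) = inn (v i) e * c) ∧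
    (∀ (b : Fin n → B) (c : B),
      smul (∑ j, smul (v j) (b j)) c = ∑ j, smul (v j) (b j * c)) :=
  stmt12_general smul inn hadd_smul hsmul_mul hinn_star hinn_lin hinn_add v hframe
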